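/- Let ρ0, ρ1 and E be n×n complex positive semidefinite matrices and let U be a unitary matrix. Then |Tr(U · √ρ0 · E · √ρ1)| ≤ √(Tr(E ρ0)) · √(Tr(E ρ1)). -/

import Mathlib

/-!
A positive semidefinite `E` defines the semi-inner product `⟪x, y⟫ = Tr(y E xᴴ)` on matrices,
and `Tr(U √ρ0 E √ρ1) = ⟪√ρ1, U √ρ0⟫`. Cauchy–Schwarz bounds it by the product of the
seminorms of `√ρ1` and `U √ρ0`, whose squares are `Tr(E ρ1)` and `Tr(E ρ0)` by cyclicity of
the trace and `Uᴴ U = 1`.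
-/

open Matrix
open scoped ComplexOrder

/-- The positive semidefinite square root of a matrix (zero if the matrix is not
positive semidefinite). -/
noncomputable def msqrt {n : ℕ} (A : Matrix (Fin n) (Fin n) ℂ) : Matrix (Fin n) (Fin n) ℂ :=
  open scoped Classical in
  if h : A.PosSemidef then
    h.1.eigenvectorUnitary.1 * diagonal ((↑) ∘ Real.sqrt ∘ h.1.eigenvalues) *
      (star h.1.eigenvectorUnitary : Matrix (Fin n) (Fin n) ℂ)
  else 0

open scoped MatrixOrder

namespace Matrix

variable {ι 𝕜 : Type*} [Fintype ι] [RCLike 𝕜]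

theorem PosSemidef.norm_trace_mul_mul_conjTranspose_le {M : Matrix ι ι 𝕜} (hM : M.PosSemidef)
    (x y : Matrix ι ι 𝕜) :
    ‖(y * M * xᴴ).trace‖ ≤
      √(RCLike.re (x * M * xᴴ).trace) * √(RCLike.re (y * M * yᴴ).trace) := by
  let := M.toMatrixSeminormedAddCommGroup hM
  let := M.toMatrixInnerProductSpace hM
  have := norm_inner_le_norm (𝕜 := 𝕜) x y
  rwa [norm_eq_sqrt_re_inner (𝕜 := 𝕜) x, norm_eq_sqrt_re_inner (𝕜 := 𝕜) y] at this

theorem trace_isometry_mul_mul_mul_conjTranspose [DecidableEq ι] {U : Matrix ι ι 𝕜}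
    (hU : Uᴴ * U = 1) (X M : Matrix ι ι 𝕜) :
    (U * X * M * (U * X)ᴴ).trace = (X * M * Xᴴ).trace := by
  rw [conjTranspose_mul, mul_assoc U, mul_assoc U, ← mul_assoc, trace_mul_cycle, mul_assoc Xᴴ, hU,
    mul_one, trace_mul_comm]

variable [DecidableEq ι]

theorem conjTranspose_sqrt (A : Matrix ι ι 𝕜) : (CFC.sqrt A)ᴴ = CFC.sqrt A :=
  (CFC.sqrt_nonneg A).posSemidef.isHermitian

theorem trace_sqrt_mul_mul_conjTranspose_sqrt {A : Matrix ι ι 𝕜} (hA : A.PosSemidef)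
    (M : Matrix ι ι 𝕜) : (CFC.sqrt A * M * (CFC.sqrt A)ᴴ).trace = (M * A).trace := by
  rw [conjTranspose_sqrt, trace_mul_cycle, CFC.sqrt_mul_sqrt_self A hA.nonneg, trace_mul_comm]

end Matrix

theorem msqrt_eq_sqrt {n : ℕ} {A : Matrix (Fin n) (Fin n) ℂ} (hA : A.PosSemidef) :
    msqrt A = CFC.sqrt A := by
  rw [CFC.sqrt_eq_real_sqrt A hA.nonneg, cfcₙ_eq_cfc (hf0 := Real.sqrt_zero),
    hA.isHermitian.cfc_eq, msqrt, dif_pos hA, IsHermitian.cfc, Unitary.conjStarAlgAut_apply]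
  rfl

theorem abs_trace_le_sqrt_mul_sqrt_general {n : ℕ}
    (ρ0 ρ1 E U : Matrix (Fin n) (Fin n) ℂ)
    (hρ0 : ρ0.PosSemidef) (hρ1 : ρ1.PosSemidef) (hE : E.PosSemidef)
    (hU : Uᴴ * U = 1) :
    ‖((U * msqrt ρ0 * E * msqrt ρ1).trace)‖ ≤
      Real.sqrt ((E * ρ0).trace.re) * Real.sqrt ((E * ρ1).trace.re) := by
  have key := hE.norm_trace_mul_mul_conjTranspose_le (CFC.sqrt ρ1) (U * CFC.sqrt ρ0)
  rw [trace_isometry_mul_mul_mul_conjTranspose hU, trace_sqrt_mul_mul_conjTranspose_sqrt hρ0,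
    trace_sqrt_mul_mul_conjTranspose_sqrt hρ1, conjTranspose_sqrt] at key
  rw [msqrt_eq_sqrt hρ0, msqrt_eq_sqrt hρ1, mul_comm]
  exact key

/-- Cauchy–Schwarz-type bound: for positive semidefinite `ρ0, ρ1, E` and a
unitary `U`, `|Tr(U √ρ0 E √ρ1)| ≤ √Tr(E ρ0) · √Tr(E ρ1)`. -/
theorem abs_trace_le_sqrt_mul_sqrt {n : ℕ}
    (ρ0 ρ1 E U : Matrix (Fin n) (Fin n) ℂ)
    (hρ0 : ρ0.PosSemidef) (hρ1 : ρ1.PosSemidef) (hE : E.PosSemidef)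
    (hU : Uᴴ * U = 1) (hU' : U * Uᴴ = 1) :
    ‖((U * msqrt ρ0 * E * msqrt ρ1).trace)‖ ≤
      Real.sqrt ((E * ρ0).trace.re) * Real.sqrt ((E * ρ1).trace.re) :=
  abs_trace_le_sqrt_mul_sqrt_general ρ0 ρ1 E U hρ0 hρ1 hE hU
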